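/- arXiv:2304.11248 — 2 statements merged into one kernel-verified Lean document; each statement's English description precedes it below -/
import Mathlib

section
/- Let t : Fin 4 → ℝ be a temporal covector and h a spatial metric compatible with t. Let C : Fin 4 → Fin 4 → Fin 4 → ℝ (written C^a_{bc}) be a connecting field. Then C is metric-compatible (t_a C^a_{bc} = 0 and C^b_{an} h^{nc} + C^c_{an} h^{bn} = 0) and in addition satisfies h^{bm} h^{cn} (C^a_{mn} − C^a_{nm}) = 0 for all a,b,c (the condition that the spatial torsion difference vanishes, i.e. T^{abc} = T̃^{abc} = 0) if and only if there exist an array x : Fin 4 → Fin 4 → ℝ and an antisymmetric array y : Fin 4 → Fin 4 → ℝ (y_{rc} = −y_{cr}) such that C^a_{bc} = 2 h^{ar}(x_{rb} t_c + y_{rc} t_b) for all a,b,c. -/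
/-!
Contract `C` with `h` on both lower indices. Vanishing spatial torsion makes the resulting
`K^{abc}` symmetric in `b, c`, compatibility with `h` makes it antisymmetric in `a, c`, and
together the two force `K = 0`. Since the radical of `h` is spanned by `t`, the image of `h` is
the annihilator of `t`, so each bilinear form `C^a_{··}` vanishes on spatial vectors; this
forces `C^a_{bc} = α^a_b t_c + β^a_c t_b`. Compatibility with `t` then makes `α` and `β`
spatial, and compatibility with `h` says exactly that `β h` is antisymmetric. Hence `α = 2 h x`,
and writing `β = 2 h Z`, the symmetric part of `Z` is again a form vanishing on spatial vectors,
so it has the shape `t ⊗ λ + λ ⊗ t`, which can be removed from `Z` without changing `h Z`.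
-/

open Matrix

theorem eq_zero_of_symm_of_antisymm {ι 𝕜 : Type*} [Field 𝕜] [NeZero (2 : 𝕜)]
    {K : ι → ι → ι → 𝕜} (hsymm : ∀ a b c, K a b c = K a c b)
    (hanti : ∀ a b c, K a b c = -K c b a) (a b c : ι) : K a b c = 0 := by
  -- Alternating the two symmetries runs through all six orderings of `a, b, c` and comes back
  -- to `K a b c` after three sign changes.
  have : 2 * K a b c = 0 := by
    linear_combination hsymm a b c + hanti a c b - hsymm b c a - hanti b a c + hsymm c a b
      + hanti c b a
  exact (mul_eq_zero.1 this).resolve_left two_ne_zero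

section

variable {ι 𝕜 : Type*} [Fintype ι] [Field 𝕜] {t : ι → 𝕜} {h : Matrix ι ι 𝕜}

theorem mul_mul_transpose_apply (A M B : Matrix ι ι 𝕜) (b c : ι) :
    (A * M * Bᵀ) b c = ∑ m, ∑ n, A b m * B c n * M m n := by
  simp only [mul_apply, transpose_apply, Finset.sum_mul]
  rw [Finset.sum_comm]
  exact Finset.sum_congr rfl fun _ _ => Finset.sum_congr rfl fun _ _ => by ring

theorem vecMul_eq_zero_of_radical (hrad : ∀ ω, ω ᵥ* h = 0 ↔ ∃ k : 𝕜, ω = k • t) :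
    t ᵥ* h = 0 :=
  (hrad t).2 ⟨1, (one_smul 𝕜 t).symm⟩

theorem mul_mul_eq_zero_of_compatible [NeZero (2 : 𝕜)] (hsym : h.IsSymm)
    {C : ι → Matrix ι ι 𝕜}
    (hmet : ∀ a b c, ∑ n, (C b a n * h n c + C c a n * h b n) = 0)
    (htor : ∀ a b c, ∑ m, ∑ n, h b m * h c n * (C a m n - C a n m) = 0) (a : ι) :
    h * C a * h = 0 := by
  ext b c
  nth_rw 2 [← hsym.eq]
  rw [Matrix.zero_apply, mul_mul_transpose_apply]
  refine eq_zero_of_symm_of_antisymm (K := fun a b c => ∑ m, ∑ n, h b m * h c n * C a m n)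
    (fun a b c => ?_) (fun a b c => ?_) a b c
  · have := htor a b c
    simp only [mul_sub, Finset.sum_sub_distrib, sub_eq_zero] at this
    rw [this, Finset.sum_comm]
    exact Finset.sum_congr rfl fun _ _ => Finset.sum_congr rfl fun _ _ => by ring
  · rw [eq_neg_iff_add_eq_zero, ← Finset.sum_eq_zero fun d (_ : d ∈ Finset.univ) =>
      mul_eq_zero_of_right (h b d) (hmet d a c)]
    simp only [Finset.mul_sum, mul_add, Finset.sum_add_distrib]
    congr 1
    · exact Finset.sum_congr rfl fun m _ => Finset.sum_congr rfl fun n _ => by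
        rw [hsym.apply c n]; ring
    · exact Finset.sum_congr rfl fun _ _ => Finset.sum_congr rfl fun _ _ => by ring

theorem sum_mul_add_sum_mul_eq_of_split (hsym : h.IsSymm) (htv : t ᵥ* h = 0)
    {α β : Matrix ι ι 𝕜} {C : ι → Matrix ι ι 𝕜}
    (hC : ∀ a b c, C a b c = α a b * t c + β a c * t b) (a b c : ι) :
    ∑ n, (C b a n * h n c + C c a n * h b n) = t a * ((β * h) b c + (β * h) c b) := by
  have hcontract : ∀ b c, ∑ n, C b a n * h n c = t a * (β * h) b c := by
    intro b c
    have hα : ∑ n, α b a * t n * h n c = 0 := by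
      simp only [mul_assoc, ← Finset.mul_sum]
      rw [show ∑ n, t n * h n c = (t ᵥ* h) c from rfl, htv, Pi.zero_apply, mul_zero]
    simp only [hC, add_mul, Finset.sum_add_distrib, hα, zero_add, mul_apply, Finset.mul_sum]
    exact Finset.sum_congr rfl fun _ _ => by ring
  rw [Finset.sum_add_distrib, hcontract]
  simp_rw [hsym.apply _ b]
  rw [hcontract, mul_add]

theorem transpose_mul_eq_neg_of_split (ht : t ≠ 0) (hsym : h.IsSymm) (htv : t ᵥ* h = 0)
    {α β : Matrix ι ι 𝕜} {C : ι → Matrix ι ι 𝕜}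
    (hC : ∀ a b c, C a b c = α a b * t c + β a c * t b)
    (hmet : ∀ a b c, ∑ n, (C b a n * h n c + C c a n * h b n) = 0) :
    (β * h)ᵀ = -(β * h) := by
  obtain ⟨i, hi⟩ := Function.ne_iff.1 ht
  ext b c
  have := hmet i c b
  rw [sum_mul_add_sum_mul_eq_of_split hsym htv hC] at this
  rw [transpose_apply, Matrix.neg_apply, eq_neg_iff_add_eq_zero]
  exact (mul_eq_zero.1 this).resolve_left hi

theorem compatible_of_split (hsym : h.IsSymm) (htv : t ᵥ* h = 0)
    {α β : Matrix ι ι 𝕜} {C : ι → Matrix ι ι 𝕜}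
    (hC : ∀ a b c, C a b c = α a b * t c + β a c * t b) (hα : t ᵥ* α = 0) (hβ : t ᵥ* β = 0)
    (hβh : (β * h)ᵀ = -(β * h)) :
    (∀ b c, ∑ a, t a * C a b c = 0) ∧
      (∀ a b c, ∑ n, (C b a n * h n c + C c a n * h b n) = 0) ∧
      (∀ a b c, ∑ m, ∑ n, h b m * h c n * (C a m n - C a n m) = 0) := by
  have hα' : ∀ b, ∑ a, t a * α a b = 0 := congrFun hα
  have hβ' : ∀ c, ∑ a, t a * β a c = 0 := congrFun hβ
  have hht : ∀ c, ∑ n, h c n * t n = 0 :=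
    congrFun (show h *ᵥ t = 0 by rw [← vecMul_transpose, hsym.eq, htv])
  refine ⟨fun b c => ?_, fun a b c => ?_, fun a b c => ?_⟩
  · simp only [hC, mul_add, Finset.sum_add_distrib, ← mul_assoc, ← Finset.sum_mul, hα', hβ',
      zero_mul, add_zero]
  · rw [sum_mul_add_sum_mul_eq_of_split hsym htv hC, ← transpose_apply (β * h) b c, hβh,
      Matrix.neg_apply, add_neg_cancel, mul_zero]
  · calc ∑ m, ∑ n, h b m * h c n * (C a m n - C a n m)
        = ∑ m, ∑ n, (h b m * (α a m - β a m) * (h c n * t n)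
            + h b m * t m * (h c n * (β a n - α a n))) := by
          simp only [hC]
          exact Finset.sum_congr rfl fun _ _ => Finset.sum_congr rfl fun _ _ => by ring
      _ = 0 := by
          simp only [Finset.sum_add_distrib, ← Finset.mul_sum, hht, mul_zero, ← Finset.sum_mul,
            zero_mul, add_zero, Finset.sum_const_zero]

variable [DecidableEq ι]

theorem exists_dotProduct_eq_one (ht : t ≠ 0) : ∃ u, t ⬝ᵥ u = 1 := by
  obtain ⟨i, hi⟩ := Function.ne_iff.1 ht
  exact ⟨Pi.single i (t i)⁻¹, by simp [dotProduct_single, mul_inv_cancel₀ hi]⟩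

theorem apply_eq_of_dotProduct_mulVec_eq_zero {u : ι → 𝕜} (hu : t ⬝ᵥ u = 1)
    {M : Matrix ι ι 𝕜} (hM : ∀ v w, t ⬝ᵥ v = 0 → t ⬝ᵥ w = 0 → v ⬝ᵥ M *ᵥ w = 0) (b c : ι) :
    M b c = (M *ᵥ u) b * t c + t b * (u ᵥ* M) c - (u ⬝ᵥ M *ᵥ u) * t b * t c := by
  have hproj : ∀ i, t ⬝ᵥ (Pi.single i 1 - t i • u) = 0 := fun i => by
    simp [dotProduct_sub, hu]
  have := hM _ _ (hproj b) (hproj c)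
  simp only [mulVec_sub, sub_dotProduct, dotProduct_sub, mulVec_smul, single_dotProduct,
    mulVec_single, MulOpposite.op_one, col_apply, one_smul, one_mul,
    smul_dotProduct, smul_eq_mul, dotProduct_smul] at this
  rw [show (u ᵥ* M) c = u ⬝ᵥ M.col c from rfl]
  linear_combination this

theorem range_mulVecLin_eq_ker_dotProduct (ht : t ≠ 0) (hsym : h.IsSymm)
    (hrad : ∀ ω, ω ᵥ* h = 0 ↔ ∃ k : 𝕜, ω = k • t) :
    LinearMap.range h.mulVecLin = LinearMap.ker (dotProductEquiv 𝕜 ι t) := by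
  have hker : LinearMap.ker h.mulVecLin = 𝕜 ∙ t := by
    ext ω
    rw [LinearMap.mem_ker, Submodule.mem_span_singleton, mulVecLin_apply, ← hsym.eq,
      mulVec_transpose, hrad]
    exact exists_congr fun k => eq_comm
  have hle : LinearMap.range h.mulVecLin ≤ LinearMap.ker (dotProductEquiv 𝕜 ι t) := by
    rintro _ ⟨w, rfl⟩
    simp [dotProduct_mulVec, vecMul_eq_zero_of_radical hrad]
  -- Both sides have codimension one.
  refine Submodule.eq_of_le_of_finrank_eq hle ?_
  have hrank := LinearMap.finrank_range_add_finrank_ker h.mulVecLin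
  have hdual := Module.Dual.finrank_ker_add_one_of_ne_zero
    ((dotProductEquiv 𝕜 ι).map_ne_zero_iff.2 ht)
  rw [hker, finrank_span_singleton ht] at hrank
  omega

theorem exists_mulVec_eq_of_dotProduct_eq_zero (ht : t ≠ 0) (hsym : h.IsSymm)
    (hrad : ∀ ω, ω ᵥ* h = 0 ↔ ∃ k : 𝕜, ω = k • t) {v : ι → 𝕜} (hv : t ⬝ᵥ v = 0) :
    ∃ w, h *ᵥ w = v := by
  have : v ∈ LinearMap.ker (dotProductEquiv 𝕜 ι t) := hv
  rwa [← range_mulVecLin_eq_ker_dotProduct ht hsym hrad] at this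

theorem exists_mul_eq_of_vecMul_eq_zero (ht : t ≠ 0) (hsym : h.IsSymm)
    (hrad : ∀ ω, ω ᵥ* h = 0 ↔ ∃ k : 𝕜, ω = k • t) {B : Matrix ι ι 𝕜} (hB : t ᵥ* B = 0) :
    ∃ Q, h * Q = B := by
  choose w hw using fun c => exists_mulVec_eq_of_dotProduct_eq_zero ht hsym hrad
    (v := fun a => B a c) (congrFun hB c)
  exact ⟨of fun r c => w c r, ext fun a c => congrFun (hw c) a⟩

theorem apply_eq_of_mul_mul_eq_zero (ht : t ≠ 0) (hsym : h.IsSymm)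
    (hrad : ∀ ω, ω ᵥ* h = 0 ↔ ∃ k : 𝕜, ω = k • t) {u : ι → 𝕜} (hu : t ⬝ᵥ u = 1)
    {M : Matrix ι ι 𝕜} (hM : h * M * h = 0) (b c : ι) :
    M b c = (M *ᵥ u) b * t c + t b * (u ᵥ* M) c - (u ⬝ᵥ M *ᵥ u) * t b * t c := by
  refine apply_eq_of_dotProduct_mulVec_eq_zero hu (fun v w hv hw => ?_) b c
  obtain ⟨v, rfl⟩ := exists_mulVec_eq_of_dotProduct_eq_zero ht hsym hrad hv
  obtain ⟨w, rfl⟩ := exists_mulVec_eq_of_dotProduct_eq_zero ht hsym hrad hw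
  rw [mulVec_mulVec, dotProduct_mulVec, ← vecMul_transpose, hsym.eq, vecMul_vecMul,
    ← dotProduct_mulVec, ← Matrix.mul_assoc, hM, zero_mulVec, dotProduct_zero]

theorem exists_transpose_eq_neg_and_mul_eq [NeZero (2 : 𝕜)] (ht : t ≠ 0) (hsym : h.IsSymm)
    (hrad : ∀ ω, ω ᵥ* h = 0 ↔ ∃ k : 𝕜, ω = k • t) {β : Matrix ι ι 𝕜} (hβ : t ᵥ* β = 0)
    (hβh : (β * h)ᵀ = -(β * h)) : ∃ y, yᵀ = -y ∧ h * y = β := by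
  obtain ⟨Z, rfl⟩ := exists_mul_eq_of_vecMul_eq_zero ht hsym hrad hβ
  set S := Z + Zᵀ with hS
  have hSh : h * S * h = 0 := by
    have : h * Zᵀ * h = (h * Z * h)ᵀ := by
      simp only [transpose_mul, hsym.eq, Matrix.mul_assoc]
    rw [hS, Matrix.mul_add, Matrix.add_mul, this, hβh, add_neg_cancel]
  -- `Z + Zᵀ` vanishes on the kernel of `t`, so it equals `t ⊗ l + l ⊗ t`; subtract `t ⊗ l`.
  obtain ⟨u, hu⟩ := exists_dotProduct_eq_one ht
  have hSsymm : u ᵥ* S = S *ᵥ u := by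
    rw [← mulVec_transpose, hS, transpose_add, transpose_transpose, add_comm]
  set l := S *ᵥ u - (2⁻¹ * (u ⬝ᵥ S *ᵥ u)) • t
  have hht : h *ᵥ t = 0 := by rw [← vecMul_transpose, hsym.eq, vecMul_eq_zero_of_radical hrad]
  refine ⟨Z - vecMulVec t l, ?_, ?_⟩
  · ext b c
    have := apply_eq_of_mul_mul_eq_zero ht hsym hrad hu hSh b c
    rw [hSsymm] at this
    have hSbc : S b c = Z b c + Z c b := rfl
    have h2 : (2 : 𝕜)⁻¹ * 2 = 1 := inv_mul_cancel₀ two_ne_zero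
    simp only [l, transpose_apply, Matrix.sub_apply, Matrix.neg_apply, vecMulVec_apply,
      Pi.sub_apply, Pi.smul_apply, smul_eq_mul]
    linear_combination this - hSbc + (t b * t c * (u ⬝ᵥ S *ᵥ u)) * h2
  · rw [Matrix.mul_sub, mul_vecMulVec, hht, zero_vecMulVec, sub_zero]

theorem exists_split_of_compatible [NeZero (2 : 𝕜)] (ht : t ≠ 0) (hsym : h.IsSymm)
    (hrad : ∀ ω, ω ᵥ* h = 0 ↔ ∃ k : 𝕜, ω = k • t) {C : ι → Matrix ι ι 𝕜}
    (htC : ∀ b c, ∑ a, t a * C a b c = 0)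
    (hmet : ∀ a b c, ∑ n, (C b a n * h n c + C c a n * h b n) = 0)
    (htor : ∀ a b c, ∑ m, ∑ n, h b m * h c n * (C a m n - C a n m) = 0) :
    ∃ α β : Matrix ι ι 𝕜, (∀ a b c, C a b c = α a b * t c + β a c * t b) ∧
      t ᵥ* α = 0 ∧ t ᵥ* β = 0 ∧ (β * h)ᵀ = -(β * h) := by
  obtain ⟨u, hu⟩ := exists_dotProduct_eq_one ht
  have hdec a :=
    apply_eq_of_mul_mul_eq_zero ht hsym hrad hu (mul_mul_eq_zero_of_compatible hsym hmet htor a)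
  have htCu : ∀ b, ∑ a, t a * (C a *ᵥ u) b = 0 := by
    intro b
    simp only [mulVec, dotProduct, Finset.mul_sum]
    rw [Finset.sum_comm]
    simp only [← mul_assoc, ← Finset.sum_mul, htC, zero_mul, Finset.sum_const_zero]
  have htuCu : ∑ a, t a * (u ⬝ᵥ C a *ᵥ u) = 0 := by
    simp only [dotProduct, Finset.mul_sum]
    rw [Finset.sum_comm]
    simp only [mul_left_comm (t _), ← Finset.mul_sum, htCu, mul_zero, Finset.sum_const_zero]
  have huCt : ∀ c, ∑ a, t a * (u ᵥ* C a) c = 0 := by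
    intro c
    simp only [vecMul, dotProduct, Finset.mul_sum]
    rw [Finset.sum_comm]
    simp only [mul_left_comm (t _), ← Finset.mul_sum, htC, mul_zero, Finset.sum_const_zero]
  let α : Matrix ι ι 𝕜 := of fun a b => (C a *ᵥ u) b - (u ⬝ᵥ C a *ᵥ u) * t b
  let β : Matrix ι ι 𝕜 := of fun a c => (u ᵥ* C a) c
  have hC : ∀ a b c, C a b c = α a b * t c + β a c * t b := fun a b c => by
    rw [hdec a b c]
    simp only [α, β, of_apply]
    ring
  refine ⟨α, β, hC, funext fun b => ?_, funext huCt,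
    transpose_mul_eq_neg_of_split ht hsym (vecMul_eq_zero_of_radical hrad) hC hmet⟩
  change ∑ a, t a * ((C a *ᵥ u) b - (u ⬝ᵥ C a *ᵥ u) * t b) = 0
  simp only [mul_sub, Finset.sum_sub_distrib, htCu, ← mul_assoc, ← Finset.sum_mul, htuCu,
    zero_mul, sub_zero]

theorem compatible_iff_exists_antisymm [NeZero (2 : 𝕜)] (ht : t ≠ 0) (hsym : h.IsSymm)
    (hrad : ∀ ω, ω ᵥ* h = 0 ↔ ∃ k : 𝕜, ω = k • t) {C : ι → Matrix ι ι 𝕜} :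
    ((∀ b c, ∑ a, t a * C a b c = 0) ∧
      (∀ a b c, ∑ n, (C b a n * h n c + C c a n * h b n) = 0) ∧
      (∀ a b c, ∑ m, ∑ n, h b m * h c n * (C a m n - C a n m) = 0)) ↔
    ∃ x y : Matrix ι ι 𝕜, yᵀ = -y ∧
      ∀ a b c, C a b c = 2 * ((h * x) a b * t c + (h * y) a c * t b) := by
  have htv := vecMul_eq_zero_of_radical hrad
  constructor
  · rintro ⟨htC, hmet, htor⟩
    obtain ⟨α, β, hC, hα, hβ, hβh⟩ := exists_split_of_compatible ht hsym hrad htC hmet htor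
    obtain ⟨x, rfl⟩ := exists_mul_eq_of_vecMul_eq_zero ht hsym hrad hα
    obtain ⟨y, hy, rfl⟩ := exists_transpose_eq_neg_and_mul_eq ht hsym hrad hβ hβh
    refine ⟨(2⁻¹ : 𝕜) • x, (2⁻¹ : 𝕜) • y, by rw [transpose_smul, hy, smul_neg], fun a b c => ?_⟩
    simp only [hC, Matrix.mul_smul, Matrix.smul_apply, smul_eq_mul, mul_add, ← mul_assoc,
      mul_inv_cancel₀ (two_ne_zero : (2 : 𝕜) ≠ 0), one_mul]
  · rintro ⟨x, y, hy, hC⟩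
    have htv2 (z : Matrix ι ι 𝕜) : t ᵥ* ((2 : 𝕜) • (h * z)) = 0 := by
      rw [vecMul_smul, ← vecMul_vecMul, htv, zero_vecMul, smul_zero]
    refine compatible_of_split hsym htv (fun a b c => ?_) (htv2 x) (htv2 y) ?_
    · rw [hC, Matrix.smul_apply, Matrix.smul_apply, smul_eq_mul, smul_eq_mul]
      ring
    · rw [transpose_mul, transpose_smul, transpose_mul, hy, hsym.eq]
      simp only [Matrix.smul_mul, Matrix.mul_smul, Matrix.neg_mul, Matrix.mul_neg, smul_neg,
        Matrix.mul_assoc]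

end

theorem connecting_field_compatible_spatial_torsion_free_iff_general
    (t : Fin 4 → ℝ) (ht : t ≠ 0)
    (h : Fin 4 → Fin 4 → ℝ)
    (hsym : ∀ a b, h a b = h b a)
    (hrad : ∀ ω : Fin 4 → ℝ, (∀ b, ∑ a, ω a * h a b = 0) ↔ ∃ k : ℝ, ω = k • t)
    (C : Fin 4 → Fin 4 → Fin 4 → ℝ) :
    ((∀ b c, ∑ a, t a * C a b c = 0) ∧
      (∀ a b c, ∑ n, (C b a n * h n c + C c a n * h b n) = 0) ∧
      (∀ a b c, ∑ m, ∑ n, h b m * h c n * (C a m n - C a n m) = 0))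
    ↔ ∃ x : Fin 4 → Fin 4 → ℝ, ∃ y : Fin 4 → Fin 4 → ℝ,
        (∀ r c, y r c = - y c r) ∧
        (∀ a b c, C a b c = 2 * ∑ r, h a r * (x r b * t c + y r c * t b)) := by
  refine (compatible_iff_exists_antisymm ht (IsSymm.ext fun a b => hsym b a)
    fun ω => funext_iff.trans (hrad ω)).trans ?_
  refine exists_congr fun x => exists_congr fun y => and_congr ?_ ?_
  · exact Matrix.ext_iff.symm.trans forall_comm
  · simp only [mul_add, Finset.sum_add_distrib, ← mul_assoc, ← Finset.sum_mul]
    rfl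

/-- A connecting field `C^a_{bc}` is metric-compatible and has vanishing
spatial torsion difference `h^{bm} h^{cn} (C^a_{mn} − C^a_{nm}) = 0` iff
`C^a_{bc} = 2 h^{ar}(x_{rb} t_c + y_{rc} t_b)` for some `x` and antisymmetric `y`. -/
theorem connecting_field_compatible_spatial_torsion_free_iff
    (t : Fin 4 → ℝ) (ht : t ≠ 0)
    (h : Fin 4 → Fin 4 → ℝ)
    (hsym : ∀ a b, h a b = h b a)
    (hpsd : ∀ ω : Fin 4 → ℝ, 0 ≤ ∑ a, ∑ b, ω a * h a b * ω b)
    (horth : ∀ a, ∑ b, h a b * t b = 0)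
    (hrad : ∀ ω : Fin 4 → ℝ, (∀ b, ∑ a, ω a * h a b = 0) ↔ ∃ k : ℝ, ω = k • t)
    (C : Fin 4 → Fin 4 → Fin 4 → ℝ) :
    ((∀ b c, ∑ a, t a * C a b c = 0) ∧
      (∀ a b c, ∑ n, (C b a n * h n c + C c a n * h b n) = 0) ∧
      (∀ a b c, ∑ m, ∑ n, h b m * h c n * (C a m n - C a n m) = 0))
    ↔ ∃ x : Fin 4 → Fin 4 → ℝ, ∃ y : Fin 4 → Fin 4 → ℝ,
        (∀ r c, y r c = - y c r) ∧
        (∀ a b c, C a b c = 2 * ∑ r, h a r * (x r b * t c + y r c * t b)) :=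
  connecting_field_compatible_spatial_torsion_free_iff_general t ht h hsym hrad C
end

section
/- Let t ∈ (ℝ⁴)* be a constant covector, x ∈ ℝ⁴ a constant vector with t_a x^a = 0, and ψ : U → ℝ twice continuously differentiable on an open set U ⊆ ℝ⁴ with x^a ∂_a ψ = 0 on U. Let F̂^a_b = x^a ∂_b ψ and let ∇̌ be the connection with Christoffel symbols Γ̌^a_{bc} = −x^a (∂_b ψ) t_c. Then the force field F̂ contributes nothing to the field equation: δ^n_a ∇̌_{[n} F̂^a_{b]} = 0 at every point of U, i.e. (1/2) δ^n_a (∇̌_n F̂^a_b − ∇̌_b F̂^a_n) = 0, where ∇̌_n F̂^a_b = ∂_n F̂^a_b + Γ̌^a_{nm} F̂^m_b − Γ̌^m_{nb} F̂^a_m. -/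
/-- The coordinate partial derivative on ℝ⁴ in the `i`-th direction. -/
noncomputable def pd (i : Fin 4) (f : (Fin 4 → ℝ) → ℝ) (p : Fin 4 → ℝ) : ℝ :=
  fderiv ℝ f p (Pi.single i 1)

/-!
The connection terms of `∇̌_n F̂^a_b` are all proportional to `x^a ∂_n ψ`; one of them carries the
factor `x^m ∂_m ψ`, which vanishes on `U`, and what is left is
`∇̌_n F̂^a_b = x^a (∂_n ∂_b ψ - (t_m x^m) ∂_n ψ ∂_b ψ)`.
This is symmetric in `n` and `b` by Schwarz's theorem, so its antisymmetrization in `n, b` has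
zero trace.
-/

open Finset

theorem fderiv_fderiv_apply_comm {𝕜 E F : Type*} [RCLike 𝕜] [NormedAddCommGroup E]
    [NormedSpace 𝕜 E] [NormedAddCommGroup F] [NormedSpace 𝕜 F] {f : E → F} {p : E}
    (hf : ContDiffAt 𝕜 2 f p) (v w : E) :
    fderiv 𝕜 (fun q => fderiv 𝕜 f q v) p w = fderiv 𝕜 (fun q => fderiv 𝕜 f q w) p v := by
  have hdf : DifferentiableAt 𝕜 (fderiv 𝕜 f) p :=
    (hf.fderiv_right (m := 1) le_rfl).differentiableAt one_ne_zero
  rw [fderiv_clm_apply hdf (differentiableAt_const v),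
    fderiv_clm_apply hdf (differentiableAt_const w)]
  simpa using hf.isSymmSndFDerivAt (by simp) w v

theorem pd_pd_comm {f : (Fin 4 → ℝ) → ℝ} {p : Fin 4 → ℝ} (hf : ContDiffAt ℝ 2 f p)
    (i j : Fin 4) : pd i (pd j f) p = pd j (pd i f) p :=
  fderiv_fderiv_apply_comm hf _ _

theorem pd_const_mul (i : Fin 4) (c : ℝ) (f : (Fin 4 → ℝ) → ℝ) (p : Fin 4 → ℝ) :
    pd i (fun q => c * f q) p = c * pd i f p := by
  simp [pd, ← smul_eq_mul, ← Pi.smul_def, fderiv_const_smul_field]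

theorem sum_rankOne_christoffel_mul_sub {ι R : Type*} [Fintype ι] [CommRing R]
    (x u t : ι → R) (n a b : ι) :
    ∑ m, -(x a * u n * t m) * (x m * u b) - ∑ m, -(x m * u n * t b) * (x a * u m)
      = x a * u n * (t b * ∑ m, x m * u m - (∑ m, t m * x m) * u b) := by
  simp only [mul_sub, mul_sum, sum_mul, ← sum_sub_distrib]
  exact sum_congr rfl fun m _ => by ring

theorem torsional_piece_contributes_nothing_to_field_equation_general
    (U : Set (Fin 4 → ℝ)) (hU : IsOpen U)
    (t : Fin 4 → ℝ) (x : Fin 4 → ℝ)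
    (ψ : (Fin 4 → ℝ) → ℝ) (hψ : ContDiffOn ℝ 2 ψ U)
    (hxψ : ∀ p ∈ U, ∑ a, x a * pd a ψ p = 0)
    (F : (Fin 4 → ℝ) → Fin 4 → Fin 4 → ℝ)
    (hF : ∀ p a b, F p a b = x a * pd b ψ p)
    (Γ : (Fin 4 → ℝ) → Fin 4 → Fin 4 → Fin 4 → ℝ)
    (hΓ : ∀ p a b c, Γ p a b c = -(x a * pd b ψ p * t c))
    (D : (Fin 4 → ℝ) → Fin 4 → Fin 4 → Fin 4 → ℝ)
    (hD : ∀ p n a b, D p n a b =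
      pd n (fun q => F q a b) p + ∑ m, Γ p a n m * F p m b
        - ∑ m, Γ p m n b * F p a m) :
    ∀ p ∈ U, ∀ b,
      (1 / 2) * ((∑ n, D p n n b) - (∑ n, D p b n n)) = 0 := by
  intro p hp b
  have hD_explicit : ∀ n a c, D p n a c =
      x a * (pd n (pd c ψ) p - (∑ m, t m * x m) * pd n ψ p * pd c ψ p) := by
    intro n a c
    rw [hD, add_sub_assoc]
    simp only [hF, hΓ, pd_const_mul]
    rw [sum_rankOne_christoffel_mul_sub x (pd · ψ p), hxψ p hp]
    ring
  have hψp : ContDiffAt ℝ 2 ψ p := hψ.contDiffAt (hU.mem_nhds hp)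
  have hsymm : ∀ n, D p n n b = D p b n n := fun n => by
    rw [hD_explicit, hD_explicit, pd_pd_comm hψp]
    ring
  simp [hsymm]

/-- with `F̂^a_b = x^a ∂_b ψ` and `Γ̌^a_{bc} = −x^a (∂_b ψ) t_c`, where
`t_a x^a = 0` and `x^a ∂_a ψ = 0` on `U`, the force field `F̂` contributes nothing to the
field equation: `δ^n_a ∇̌_{[n} F̂^a_{b]} = 0` on `U`. -/
theorem torsional_piece_contributes_nothing_to_field_equation
    (U : Set (Fin 4 → ℝ)) (hU : IsOpen U)
    (t : Fin 4 → ℝ) (x : Fin 4 → ℝ)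
    (htx : ∑ a, t a * x a = 0)
    (ψ : (Fin 4 → ℝ) → ℝ) (hψ : ContDiffOn ℝ 2 ψ U)
    (hxψ : ∀ p ∈ U, ∑ a, x a * pd a ψ p = 0)
    (F : (Fin 4 → ℝ) → Fin 4 → Fin 4 → ℝ)
    (hF : ∀ p a b, F p a b = x a * pd b ψ p)
    (Γ : (Fin 4 → ℝ) → Fin 4 → Fin 4 → Fin 4 → ℝ)
    (hΓ : ∀ p a b c, Γ p a b c = -(x a * pd b ψ p * t c))
    (D : (Fin 4 → ℝ) → Fin 4 → Fin 4 → Fin 4 → ℝ)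
    (hD : ∀ p n a b, D p n a b =
      pd n (fun q => F q a b) p + ∑ m, Γ p a n m * F p m b
        - ∑ m, Γ p m n b * F p a m) :
    ∀ p ∈ U, ∀ b,
      (1 / 2) * ((∑ n, D p n n b) - (∑ n, D p b n n)) = 0 :=
  torsional_piece_contributes_nothing_to_field_equation_general U hU t x ψ hψ hxψ F hF Γ hΓ D hD
end
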